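/- arXiv:0805.3853 — 2 statements merged into one kernel-verified Lean document; each statement's English description precedes it below -/
import Mathlib

section
/- Let α < 1 be real and let V : ℕ × ℕ → ℝ satisfy the backward recursion V(n,k) = (n − αk)·V(n+1,k) + V(n+1,k+1) for all integers 1 ≤ k ≤ n. Then the Gibbs EPPF p of type α with weights V satisfies the consistency (addition) rule: for every k-tuple (n_1,…,n_k) of positive integers with sum n, p(n_1,…,n_k) = ∑_{j=1}^{k} p(n_1,…,n_j + 1,…,n_k) + p(n_1,…,n_k,1). -/
/-!
Increasing block `j` from `n_j` to `n_j + 1` multiplies `∏ (1-α)_{n_i-1↑}` by `n_j - α`.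
Summed over `j` these factors give `n - αk`, so the right-hand side is
`((n - αk) V(n+1,k) + V(n+1,k+1)) ∏ (1-α)_{n_i-1↑}`, which is the left-hand side by the recursion.
-/

open Finset

/-- Rising factorial `(x)_{n↑} = ∏_{i=0}^{n-1} (x + i)`. -/
noncomputable def risefac (x : ℝ) (n : ℕ) : ℝ := ∏ i ∈ Finset.range n, (x + i)

@[simp]
theorem risefac_zero (x : ℝ) : risefac x 0 = 1 := prod_range_zero _

theorem risefac_succ (x : ℝ) (m : ℕ) : risefac x (m + 1) = (x + m) * risefac x m := by
  rw [risefac, prod_range_succ, mul_comm, risefac]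

theorem risefac_one_sub_succ_sub_one (α : ℝ) {m : ℕ} (hm : 0 < m) :
    risefac (1 - α) (m + 1 - 1) = ((m : ℝ) - α) * risefac (1 - α) (m - 1) := by
  obtain ⟨m, rfl⟩ := Nat.exists_eq_add_one_of_ne_zero hm.ne'
  rw [Nat.add_sub_cancel, Nat.add_sub_cancel, risefac_succ]
  push_cast
  ring

theorem prod_risefac_update_succ {ι : Type*} [Fintype ι] [DecidableEq ι] (α : ℝ)
    (nvec : ι → ℕ) (j : ι) (hj : 0 < nvec j) :
    ∏ i, risefac (1 - α) ((if i = j then nvec i + 1 else nvec i) - 1)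
      = ((nvec j : ℝ) - α) * ∏ i, risefac (1 - α) (nvec i - 1) := by
  have factor : ∀ i, risefac (1 - α) ((if i = j then nvec i + 1 else nvec i) - 1)
      = (if i = j then (nvec j : ℝ) - α else 1) * risefac (1 - α) (nvec i - 1) := by
    intro i
    split_ifs with hij
    · subst hij
      exact risefac_one_sub_succ_sub_one α hj
    · rw [one_mul]
  simp only [factor, prod_mul_distrib, prod_ite_eq', mem_univ, if_true]

theorem card_le_sum_of_pos {ι : Type*} [Fintype ι] (nvec : ι → ℕ) (hpos : ∀ j, 0 < nvec j) :
    Fintype.card ι ≤ ∑ j, nvec j := by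
  simpa using card_nsmul_le_sum univ nvec 1 fun j _ => hpos j

theorem gibbs_eppf_consistency_general (α : ℝ) (V : ℕ → ℕ → ℝ)
    (hV : ∀ n k : ℕ, 1 ≤ k → k ≤ n →
      V n k = ((n : ℝ) - α * k) * V (n + 1) k + V (n + 1) (k + 1))
    (k : ℕ) (hk : 1 ≤ k) (nvec : Fin k → ℕ) (hpos : ∀ j, 0 < nvec j)
    (n : ℕ) (hsum : ∑ j, nvec j = n) :
    V n k * ∏ j, risefac (1 - α) (nvec j - 1)
      = (∑ j, V (n + 1) k *
            ∏ i, risefac (1 - α) ((if i = j then nvec i + 1 else nvec i) - 1))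
        + V (n + 1) (k + 1) *
            ((∏ j, risefac (1 - α) (nvec j - 1)) * risefac (1 - α) (1 - 1)) := by
  have hkn : k ≤ n := by simpa [hsum] using card_le_sum_of_pos nvec hpos
  have hweights : ∑ j, ((nvec j : ℝ) - α) = (n : ℝ) - α * k := by
    rw [sum_sub_distrib, ← Nat.cast_sum, hsum]
    simp [mul_comm]
  simp only [prod_risefac_update_succ α nvec _ (hpos _), Nat.sub_self, risefac_zero,
    ← mul_assoc, ← sum_mul, ← mul_sum, hweights, hV n k hk hkn]
  ring

/-- If the weights `V` satisfy the backward recursion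
`V(n,k) = (n − αk)·V(n+1,k) + V(n+1,k+1)` for `1 ≤ k ≤ n`, then the Gibbs EPPF of type `α`,
`p(n_1,…,n_k) = V(n,k) ∏_j (1-α)_{n_j-1↑}`, satisfies the consistency (addition) rule
`p(n_1,…,n_k) = ∑_{j=1}^k p(n_1,…,n_j+1,…,n_k) + p(n_1,…,n_k,1)`. -/
theorem gibbs_eppf_consistency (α : ℝ) (hα : α < 1) (V : ℕ → ℕ → ℝ)
    (hV : ∀ n k : ℕ, 1 ≤ k → k ≤ n →
      V n k = ((n : ℝ) - α * k) * V (n + 1) k + V (n + 1) (k + 1))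
    (k : ℕ) (hk : 1 ≤ k) (nvec : Fin k → ℕ) (hpos : ∀ j, 0 < nvec j)
    (n : ℕ) (hsum : ∑ j, nvec j = n) :
    V n k * ∏ j, risefac (1 - α) (nvec j - 1)
      = (∑ j, V (n + 1) k *
            ∏ i, risefac (1 - α) ((if i = j then nvec i + 1 else nvec i) - 1))
        + V (n + 1) (k + 1) *
            ((∏ j, risefac (1 - α) (nvec j - 1)) * risefac (1 - α) (1 - 1)) :=
  gibbs_eppf_consistency_general α V hV k hk nvec hpos n hsum
end

section
/- Let α < 1 be real, let V : ℕ × ℕ → ℝ be weights, let (n_1,…,n_k) be positive integers with sum n and V(n,k) ≠ 0, and let m ≥ 1. For the Gibbs EPPF p of type α with weights V, summing over all partitions {B_1,…,B_{k*}} of the set {1,…,m} into nonempty blocks (k* ranging over the number of blocks): ∑_{partitions of {1,…,m}} p(n_1,…,n_k, |B_1|,…,|B_{k*}|) / p(n_1,…,n_k) = ∑_{k*=1}^{m} (V(n+m, k+k*)/V(n,k)) · S_{m,k*}^{-1,-α}. -/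
/-- Generalized Stirling number `S_{n,k}^{-1,-α} = (n!/k!) ∑ ∏_j (1-α)_{n_j-1↑}/n_j!`,
the sum over positive tuples `(n_1,…,n_k)` with sum `n`. -/
noncomputable def genStirling (α : ℝ) (n k : ℕ) : ℝ :=
  ((n.factorial : ℝ) / k.factorial) *
    ∑ f ∈ (Finset.Nat.antidiagonalTuple k n).filter (fun f => ∀ i, 0 < f i),
      ∏ j, risefac (1 - α) (f j - 1) / (f j).factorial

/-- `P` is a partition of `{1,…,n}` (modeled as `Fin n`) into nonempty blocks. -/
def isSetPartition {n : ℕ} (P : Finset (Finset (Fin n))) : Prop :=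
  ∅ ∉ P ∧ (∀ A ∈ P, ∀ B ∈ P, A ≠ B → Disjoint A B) ∧ P.sup id = Finset.univ

instance {n : ℕ} (P : Finset (Finset (Fin n))) : Decidable (isSetPartition P) := by
  unfold isSetPartition; infer_instance

/-- All partitions of `{1,…,n}` into nonempty blocks. -/
def allPartitions (n : ℕ) : Finset (Finset (Finset (Fin n))) :=
  Finset.univ.filter (fun P => isSetPartition P)

open Finset Function Equiv

section FiberCount

variable {α ι : Type*} [Fintype α] [DecidableEq ι]

theorem exists_perm_comp_eq_iff {σ₀ σ : α → ι} :
    (∃ g : Perm α, σ₀ ∘ g = σ) ↔ ∀ j, #{a | σ a = j} = #{a | σ₀ a = j} := by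
  simp only [← Fintype.card_subtype]
  constructor
  · rintro ⟨g, rfl⟩ j
    exact Fintype.card_congr (g.subtypeEquiv fun _ => Iff.rfl)
  · intro h
    let g : Perm α := (sigmaFiberEquiv σ).symm.trans
      ((sigmaCongrRight fun j => Fintype.equivOfCardEq (h j)).trans (sigmaFiberEquiv σ₀))
    exact ⟨g, funext fun a => (Fintype.equivOfCardEq (h (σ a)) ⟨a, rfl⟩).2⟩

variable [Fintype ι]

theorem exists_card_fiber_eq (f : ι → ℕ) (hf : ∑ j, f j = Fintype.card α) :
    ∃ σ₀ : α → ι, ∀ j, #{a | σ₀ a = j} = f j := by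
  let e : α ≃ Σ j, Fin (f j) := Fintype.equivOfCardEq (by simp [hf])
  refine ⟨fun a => (e a).1, fun j => ?_⟩
  rw [← Fintype.card_subtype, ← Fintype.card_fin (f j)]
  exact Fintype.card_congr ((e.subtypeEquiv fun _ => Iff.rfl).trans (sigmaSubtype j))

variable [DecidableEq α]

theorem card_filter_card_fiber_eq_mul_prod_factorial (σ₀ : α → ι) :
    #{σ : α → ι | ∀ j, #{a | σ a = j} = #{a | σ₀ a = j}} * ∏ j, (#{a | σ₀ a = j}).factorial =
      (Fintype.card α).factorial := by
  have := (MulAction.stabilizer (Perm α)ᵈᵐᵃ σ₀).index_mul_card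
  rw [MulAction.index_stabilizer, ← Nat.card_coe_set_eq,
    Nat.card_congr (DomMulAct.mk (M := Perm α)).symm, Nat.card_perm,
    Nat.card_eq_fintype_card (α := α)] at this
  simp only [← Fintype.card_subtype]
  rw [← this, ← DomMulAct.stabilizer_card, ← Nat.card_eq_fintype_card, ← Nat.card_eq_fintype_card]
  congr 1
  · refine Nat.card_congr <| subtypeEquivRight fun σ => ?_
    rw [MulAction.mem_orbit_iff, DomMulAct.mk.surjective.exists]
    simp only [Fintype.card_subtype]
    exact exists_perm_comp_eq_iff.symm
  · exact Nat.card_congr <| subtypeEquiv DomMulAct.mk fun _ => Iff.rfl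

theorem card_filter_card_fiber_eq_multinomial (f : ι → ℕ) (hf : ∑ j, f j = Fintype.card α) :
    #{σ : α → ι | ∀ j, #{a | σ a = j} = f j} = Nat.multinomial univ f := by
  obtain ⟨σ₀, hσ₀⟩ := exists_card_fiber_eq f hf
  have hcount := card_filter_card_fiber_eq_mul_prod_factorial σ₀
  rw [← hf, ← Nat.multinomial_spec univ f, mul_comm (∏ _, _)] at hcount
  simp only [hσ₀] at hcount
  exact Nat.eq_of_mul_eq_mul_right (by positivity) hcount

end FiberCount

section SurjectiveSums

variable {α : Type*} [Fintype α] [DecidableEq α] {R : Type*} [CommSemiring R]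

theorem sum_surjective_eq_sum_multinomial (g : ℕ → R) (k : ℕ) :
    ∑ σ : α → Fin k with Surjective σ, ∏ j, g #{a | σ a = j} =
      ∑ f ∈ (Nat.antidiagonalTuple k (Fintype.card α)).filter (fun f => ∀ i, 0 < f i),
        (Nat.multinomial univ f : R) * ∏ j, g (f j) := by
  have hmaps : ∀ σ ∈ ({σ : α → Fin k | Surjective σ} : Finset _),
      (fun j => #{a | σ a = j}) ∈
        (Nat.antidiagonalTuple k (Fintype.card α)).filter (fun f => ∀ i, 0 < f i) := by
    intro σ hσ
    simp only [mem_filter, mem_univ, true_and] at hσ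
    refine mem_filter.2 ⟨Nat.mem_antidiagonalTuple.2 ?_, fun j => card_pos.2 ?_⟩
    · exact (card_eq_sum_card_fiberwise fun a _ => mem_univ (σ a)).symm
    · obtain ⟨a, rfl⟩ := hσ j
      exact ⟨a, by simp⟩
  rw [← sum_fiberwise_of_maps_to hmaps]
  refine sum_congr rfl fun f hf => ?_
  obtain ⟨hsum, hpos⟩ := mem_filter.1 hf
  have hfiber : ({σ : α → Fin k | Surjective σ} : Finset _).filter
      (fun σ => (fun j => #{a | σ a = j}) = f) =
        ({σ | ∀ j, #{a | σ a = j} = f j} : Finset (α → Fin k)) := by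
    ext σ
    simp only [mem_filter, mem_univ, true_and, funext_iff]
    refine ⟨And.right, fun h => ⟨fun j => ?_, h⟩⟩
    obtain ⟨a, ha⟩ := card_pos.1 ((h j).symm ▸ hpos j)
    exact ⟨a, (mem_filter.1 ha).2⟩
  rw [hfiber, sum_congr rfl fun σ hσ => prod_congr rfl fun j _ => by rw [(mem_filter.1 hσ).2 j],
    sum_const, nsmul_eq_mul]
  -- `convert`: over `Fin k` the filter's `∀ j` is decided by `Nat.decidableForallFin`, not by the
  -- generic instance in `card_filter_card_fiber_eq_multinomial`.
  convert congrArg (fun c : ℕ => (c : R) * ∏ j, g (f j))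
    (card_filter_card_fiber_eq_multinomial f (Nat.mem_antidiagonalTuple.1 hsum))

end SurjectiveSums

namespace isSetPartition

variable {m : ℕ} {P : Finset (Finset (Fin m))}

def toFinpartition (hP : isSetPartition P) : Finpartition (univ : Finset (Fin m)) where
  parts := P
  supIndep := supIndep_iff_pairwiseDisjoint.2 fun A hA B hB h => hP.2.1 A hA B hB h
  sup_parts := hP.2.2
  bot_notMem := hP.1

theorem card_mem_Icc (hP : isSetPartition P) (hm : 1 ≤ m) : #P ∈ Icc 1 m := by
  have hne : (univ : Finset (Fin m)) ≠ ⊥ := univ_nonempty_iff.2 ⟨⟨0, hm⟩⟩ |>.ne_empty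
  refine mem_Icc.2 ⟨card_pos.2 (hP.toFinpartition.parts_nonempty hne), ?_⟩
  exact hP.toFinpartition.card_parts_le_card.trans_eq (card_fin m)

end isSetPartition

section Fibers

variable {α ι : Type*} [Fintype α] [DecidableEq ι] {σ : α → ι}

theorem fiber_nonempty (hσ : Surjective σ) (j : ι) :
    ({a | σ a = j} : Finset α).Nonempty :=
  let ⟨a, ha⟩ := hσ j
  ⟨a, mem_filter.2 ⟨mem_univ a, ha⟩⟩

theorem fiber_injective (hσ : Surjective σ) :
    Injective fun j => ({a | σ a = j} : Finset α) := by
  intro j j' h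
  obtain ⟨a, ha⟩ := fiber_nonempty hσ j
  have ha' := (Finset.ext_iff.1 h a).1 ha
  simp only [mem_filter, mem_univ, true_and] at ha ha'
  exact ha ▸ ha'

variable [DecidableEq α] [Fintype ι]

def fibers (σ : α → ι) : Finset (Finset α) := univ.image fun j => ({a | σ a = j} : Finset α)

theorem card_fibers (hσ : Surjective σ) : #(fibers σ) = Fintype.card ι := by
  rw [fibers, card_image_of_injective _ (fiber_injective hσ), card_univ]

theorem prod_fibers {M : Type*} [CommMonoid M] (hσ : Surjective σ) (g : Finset α → M) :
    ∏ A ∈ fibers σ, g A = ∏ j, g {a | σ a = j} :=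
  prod_image fun _ _ _ _ h => fiber_injective hσ h

theorem isSetPartition_fibers {m : ℕ} {σ : Fin m → ι} (hσ : Surjective σ) :
    isSetPartition (fibers σ) := by
  refine ⟨fun h => ?_, fun A hA B hB hAB => ?_, eq_univ_of_forall fun i => ?_⟩
  · obtain ⟨j, -, hj⟩ := mem_image.1 h
    exact (fiber_nonempty hσ j).ne_empty hj
  · obtain ⟨j, -, rfl⟩ := mem_image.1 hA
    obtain ⟨j', -, rfl⟩ := mem_image.1 hB
    exact disjoint_filter.2 fun a _ h h' => hAB (by rw [← h, ← h'])
  · exact mem_sup.2 ⟨_, mem_image_of_mem _ (mem_univ (σ i)), by simp⟩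

end Fibers

section Labelling

variable {m : ℕ} {ι : Type*} [DecidableEq ι] {P : Finset (Finset (Fin m))}

def labelling (hP : isSetPartition P) (e : ι ≃ P) (i : Fin m) : ι :=
  e.symm ⟨hP.toFinpartition.part i, hP.toFinpartition.part_mem.2 (mem_univ i)⟩

theorem fiber_labelling (hP : isSetPartition P) (e : ι ≃ P) (j : ι) :
    ({i | labelling hP e i = j} : Finset (Fin m)) = e j := by
  ext i
  simp only [mem_filter, mem_univ, true_and, labelling, Equiv.symm_apply_eq, Subtype.ext_iff]
  exact hP.toFinpartition.part_eq_iff_mem (e j).2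

theorem labelling_injective (hP : isSetPartition P) :
    Injective (labelling (ι := ι) hP) := by
  intro e e' h
  ext j : 1
  apply Subtype.ext
  rw [← fiber_labelling hP e, ← fiber_labelling hP e', h]

theorem labelling_surjective (hP : isSetPartition P) (e : ι ≃ P) :
    Surjective (labelling hP e) := fun j => by
  obtain ⟨i, hi⟩ := hP.toFinpartition.nonempty_of_mem_parts (e j).2
  rw [← fiber_labelling hP e j] at hi
  exact ⟨i, (mem_filter.1 hi).2⟩

variable [Fintype ι]

theorem fibers_labelling (hP : isSetPartition P) (e : ι ≃ P) : fibers (labelling hP e) = P := by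
  ext A
  simp only [fibers, fiber_labelling, mem_image, mem_univ, true_and]
  exact ⟨by rintro ⟨j, rfl⟩; exact (e j).2, fun hA => ⟨e.symm ⟨A, hA⟩, by simp⟩⟩

theorem image_labelling (hP : isSetPartition P) :
    univ.image (labelling (ι := ι) hP) =
      ({σ | Surjective σ ∧ fibers σ = P} : Finset (Fin m → ι)) := by
  ext σ
  simp only [mem_image, mem_univ, true_and, mem_filter]
  constructor
  · rintro ⟨e, rfl⟩
    exact ⟨labelling_surjective hP e, fibers_labelling hP e⟩
  · rintro ⟨hσ, rfl⟩
    let e : ι ≃ fibers σ := Equiv.ofBijective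
      (fun j => ⟨({a | σ a = j} : Finset (Fin m)), mem_image_of_mem _ (mem_univ j)⟩)
      ⟨fun j j' h => fiber_injective hσ (congrArg Subtype.val h), by
        rintro ⟨A, hA⟩
        obtain ⟨j, -, rfl⟩ := mem_image.1 hA
        exact ⟨j, rfl⟩⟩
    refine ⟨e, funext fun i => ?_⟩
    rw [labelling, Equiv.symm_apply_eq, Subtype.ext_iff]
    exact (hP.toFinpartition.part_eq_iff_mem (e (σ i)).2).2
      (mem_filter.2 ⟨mem_univ i, rfl⟩)

theorem card_filter_fibers_eq (hP : isSetPartition P) (hcard : #P = Fintype.card ι) :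
    #{σ : Fin m → ι | Surjective σ ∧ fibers σ = P} = (Fintype.card ι).factorial := by
  rw [← image_labelling hP, card_image_of_injective _ (labelling_injective hP), card_univ,
    Fintype.card_equiv (Fintype.equivOfCardEq (by simp [hcard]))]

end Labelling

theorem sum_surjective_eq_factorial_mul_sum_partitions {R : Type*} [CommSemiring R]
    (g : ℕ → R) (m k : ℕ) :
    ∑ σ : Fin m → Fin k with Surjective σ, ∏ j, g #{i | σ i = j} =
      k.factorial * ∑ P ∈ allPartitions m with #P = k, ∏ A ∈ P, g #A := by
  have hmaps : ∀ σ ∈ ({σ | Surjective σ} : Finset (Fin m → Fin k)),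
      fibers σ ∈ {P ∈ allPartitions m | #P = k} := by
    intro σ hσ
    have hσ : Surjective σ := (mem_filter.1 hσ).2
    simpa [allPartitions, isSetPartition_fibers hσ] using card_fibers hσ
  rw [← sum_fiberwise_of_maps_to hmaps, mul_sum]
  refine sum_congr rfl fun P hP => ?_
  obtain ⟨hPpart, hPk⟩ : isSetPartition P ∧ #P = k := by simpa [allPartitions] using hP
  calc _ = ∑ σ ∈ ({σ | Surjective σ} : Finset (Fin m → Fin k)) with fibers σ = P,
        ∏ A ∈ P, g #A := by
        refine sum_congr rfl fun σ hσ => ?_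
        obtain ⟨hsurj, rfl⟩ := mem_filter.1 hσ
        exact (prod_fibers (mem_filter.1 hsurj).2 fun A => g #A).symm
    _ = _ := by
        rw [sum_const, filter_filter,
          card_filter_fibers_eq hPpart (by rw [hPk, Fintype.card_fin]), Fintype.card_fin,
          nsmul_eq_mul]

theorem sum_partitions_eq_genStirling (α : ℝ) (m k : ℕ) :
    ∑ P ∈ allPartitions m with #P = k, ∏ A ∈ P, risefac (1 - α) (#A - 1) =
      genStirling α m k := by
  have h1 := sum_surjective_eq_factorial_mul_sum_partitions (fun t => risefac (1 - α) (t - 1)) m k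
  have h2 := sum_surjective_eq_sum_multinomial (α := Fin m) (fun t => risefac (1 - α) (t - 1)) k
  rw [h1, Fintype.card_fin] at h2
  rw [genStirling, div_mul_eq_mul_div, eq_div_iff (by positivity), mul_comm, h2, mul_sum]
  refine sum_congr rfl fun f hf => ?_
  have hspec := Nat.multinomial_spec univ f
  rw [Nat.mem_antidiagonalTuple.1 (mem_filter.1 hf).1] at hspec
  rw [prod_div_distrib, ← hspec, Nat.cast_mul, Nat.cast_prod]
  field_simp

theorem risefac_pos {x : ℝ} (hx : 0 < x) (n : ℕ) : 0 < risefac x n :=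
  prod_pos fun i _ => by positivity

theorem gibbs_all_new_tables_general (α : ℝ) (hα : α < 1) (V : ℕ → ℕ → ℝ)
    (k : ℕ) (nvec : Fin k → ℕ)
    (n : ℕ) (m : ℕ) (hm : 1 ≤ m) :
    ∑ P ∈ allPartitions m,
        (V (n + m) (k + P.card) * ((∏ j, risefac (1 - α) (nvec j - 1)) *
            ∏ A ∈ P, risefac (1 - α) (A.card - 1))) /
          (V n k * ∏ j, risefac (1 - α) (nvec j - 1))
      = ∑ kstar ∈ Finset.Icc 1 m, (V (n + m) (k + kstar) / V n k) * genStirling α m kstar := by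
  have hR : ∏ j, risefac (1 - α) (nvec j - 1) ≠ 0 :=
    (prod_pos fun j _ => risefac_pos (by linarith) _).ne'
  have hcard : ∀ P ∈ allPartitions m, #P ∈ Icc 1 m := fun P hP =>
    (mem_filter.1 hP).2.card_mem_Icc hm
  calc _ = ∑ P ∈ allPartitions m,
        V (n + m) (k + #P) / V n k * ∏ A ∈ P, risefac (1 - α) (#A - 1) := by
        refine sum_congr rfl fun P _ => ?_
        rw [mul_left_comm, mul_comm (V n k), mul_div_mul_left _ _ hR, mul_div_right_comm]
    _ = ∑ kstar ∈ Icc 1 m, ∑ P ∈ allPartitions m with #P = kstar,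
        V (n + m) (k + kstar) / V n k * ∏ A ∈ P, risefac (1 - α) (#A - 1) := by
        rw [← sum_fiberwise_of_maps_to hcard]
        refine sum_congr rfl fun kstar _ => sum_congr rfl fun P hP => ?_
        rw [(mem_filter.1 hP).2]
    _ = _ := by
        simp only [← mul_sum, sum_partitions_eq_genStirling]

/-- Summing the seating ratios of a Gibbs EPPF of type `α` over all partitions
`{B_1,…,B_{k*}}` of the `m` new customers into new tables:
`∑_P p(n_1,…,n_k,|B_1|,…,|B_{k*}|)/p(n_1,…,n_k)
  = ∑_{k*=1}^m (V(n+m,k+k*)/V(n,k)) S_{m,k*}^{-1,-α}`,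
where `p(n_1,…,n_k) = V(n,k) ∏_j (1−α)_{n_j−1↑}`. -/
theorem gibbs_all_new_tables (α : ℝ) (hα : α < 1) (V : ℕ → ℕ → ℝ)
    (k : ℕ) (nvec : Fin k → ℕ) (hpos : ∀ j, 0 < nvec j)
    (n : ℕ) (hsum : ∑ j, nvec j = n) (hVn : V n k ≠ 0) (m : ℕ) (hm : 1 ≤ m) :
    ∑ P ∈ allPartitions m,
        (V (n + m) (k + P.card) * ((∏ j, risefac (1 - α) (nvec j - 1)) *
            ∏ A ∈ P, risefac (1 - α) (A.card - 1))) /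
          (V n k * ∏ j, risefac (1 - α) (nvec j - 1))
      = ∑ kstar ∈ Finset.Icc 1 m, (V (n + m) (k + kstar) / V n k) * genStirling α m kstar :=
  gibbs_all_new_tables_general α hα V k nvec n m hm
end
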